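/- (Theorem 3, asymptotic form) Let σ > 0 and let p be an even positive integer. Let H(ε) be the differential entropy of the density p(x) = C(ε) p_G(x) exp(−ε x^p), and let H₁(ε) = log(√(2π) σ (1 − ε σ^p (p−1)!!)) + (1 − ε σ^p (p−1)!!)^{−1} · (1/2 + ε σ^p ((p−1)!! − (1/2)(p+1)!!)). Then H(ε) − H₁(ε) = O(ε²) as ε → 0 from the right. -/

import Mathlib

open MeasureTheory Real Filter Topology Asymptotics

/-- The centered Gaussian density with standard deviation `σ`. -/
noncomputable def pG (σ x : ℝ) : ℝ :=
  (1 / (Real.sqrt (2 * Real.pi) * σ)) * Real.exp (-x ^ 2 / (2 * σ ^ 2))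

/-- The normalization integral of the perturbed density. -/
noncomputable def Zp (σ : ℝ) (p : ℕ) (ε : ℝ) : ℝ :=
  ∫ x : ℝ, pG σ x * Real.exp (-ε * x ^ p)

/-- The perturbed density `p(x) = C(ε) p_G(x) exp(-ε x^p)`. -/
noncomputable def ppert (σ : ℝ) (p : ℕ) (ε : ℝ) (x : ℝ) : ℝ :=
  (Zp σ p ε)⁻¹ * pG σ x * Real.exp (-ε * x ^ p)

/-- The differential entropy of the perturbed density. -/
noncomputable def Hpert (σ : ℝ) (p : ℕ) (ε : ℝ) : ℝ :=
  -∫ x : ℝ, ppert σ p ε x * Real.log (ppert σ p ε x)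

open scoped Nat

/-!
With `Z = Zp σ p ε` and `M_k(ε) = ∫ p_G(x) x^k e^{-ε x^p} dx`, the entropy is exactly
`log (√(2π) σ Z) + Z⁻¹ (M_2 / (2σ²) + ε M_p)`. The sandwich `1 - t ≤ e^{-t} ≤ 1 - t + t²/2`
(`t ≥ 0`) gives `M_k(ε) = m_k - ε m_{k+p} + O(ε²)` for the Gaussian moments `m_k = σ^k (k-1)!!`,
and `H₁` is the entropy formula with `Z`, `M_2`, `M_p` replaced by their first-order expansions
`1 - ε m_p`, `σ² - ε m_{p+2}`, `m_p`. As `log` and `x ↦ x⁻¹` are strictly differentiable at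
the (positive) limits, the `O(ε²)` errors pass through the formula.
-/

theorem Real.exp_neg_le_one_sub_add_sq_div_two {t : ℝ} (ht : 0 ≤ t) :
    exp (-t) ≤ 1 - t + t ^ 2 / 2 := by
  have hpos : 0 < 1 - t + t ^ 2 / 2 := by nlinarith [sq_nonneg (t - 1)]
  rw [exp_neg, inv_le_iff_one_le_mul₀ (exp_pos t)]
  -- `(1 + t + t²/2)(1 - t + t²/2) = 1 + t⁴/4`
  nlinarith [quadratic_le_exp_of_nonneg ht, pow_nonneg ht 4]

theorem Real.abs_exp_neg_sub_one_sub_le {t : ℝ} (ht : 0 ≤ t) :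
    |exp (-t) - (1 - t)| ≤ t ^ 2 / 2 := by
  rw [abs_of_nonneg (sub_nonneg.2 (one_sub_le_exp_neg t))]
  linarith [exp_neg_le_one_sub_add_sq_div_two ht]

theorem HasStrictDerivAt.isBigO_comp_sub_comp {α : Type*} {l : Filter α} {f : ℝ → ℝ} {f' a : ℝ}
    (hf : HasStrictDerivAt f f' a) {u v : α → ℝ} (hu : Tendsto u l (𝓝 a))
    (hv : Tendsto v l (𝓝 a)) :
    (fun x => f (u x) - f (v x)) =O[l] fun x => u x - v x :=
  hf.hasStrictFDerivAt.isBigO_sub.comp_tendsto (hu.prodMk_nhds hv)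

theorem Asymptotics.IsBigO.mul_sub_mul {α : Type*} {l : Filter α} {f₁ f₂ g₁ g₂ k : α → ℝ}
    (h₁ : (fun x => f₁ x - g₁ x) =O[l] k) (h₂ : (fun x => f₂ x - g₂ x) =O[l] k)
    (hf₁ : f₁ =O[l] (fun _ => (1 : ℝ))) (hg₂ : g₂ =O[l] (fun _ => (1 : ℝ))) :
    (fun x => f₁ x * f₂ x - g₁ x * g₂ x) =O[l] k := by
  have h₁' := h₁.mul hg₂
  have h₂' := hf₁.mul h₂
  simp only [mul_one, one_mul] at h₁' h₂'
  exact (h₁'.add h₂').congr_left fun x => by ring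

theorem Asymptotics.IsBigO.sub_const_isBigO_id {l : Filter ℝ} (hl : l ≤ 𝓝 0) {f : ℝ → ℝ}
    {a b : ℝ} (h : (fun ε => f ε - (a - ε * b)) =O[l] (· ^ 2)) :
    (fun ε => f ε - a) =O[l] id := by
  have hsq : (fun ε : ℝ => ε ^ 2) =O[l] id :=
    ((isLittleO_pow_pow (𝕜 := ℝ) (m := 1) one_lt_two).isBigO.mono hl).congr_right pow_one
  exact ((h.trans hsq).add ((isBigO_refl id l).const_mul_left (-b))).congr_left
    fun ε => by simp only [id]; ring

section Gaussian

variable {σ : ℝ}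

theorem pG_eq_mul_exp (x : ℝ) :
    pG σ x = (√(2 * π) * σ)⁻¹ * exp (-(2 * σ ^ 2)⁻¹ * x ^ 2) := by
  rw [pG, one_div, neg_mul, neg_div, div_eq_inv_mul]

theorem pG_pos (hσ : 0 < σ) (x : ℝ) : 0 < pG σ x := by
  unfold pG
  positivity

theorem log_pG (hσ : 0 < σ) (x : ℝ) :
    log (pG σ x) = -log (√(2 * π) * σ) - x ^ 2 / (2 * σ ^ 2) := by
  rw [pG, log_mul (by positivity) (exp_pos _).ne', log_exp, one_div, log_inv, neg_div]
  ring

theorem hasDerivAt_pG (hσ : 0 < σ) (x : ℝ) : HasDerivAt (pG σ) (-(x / σ ^ 2) * pG σ x) x := by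
  have h := (((hasDerivAt_pow 2 x).neg.div_const (2 * σ ^ 2)).exp).const_mul
    (1 / (√(2 * π) * σ))
  refine h.congr_deriv ?_
  rw [pG, Pi.neg_apply]
  field_simp
  ring

theorem integrable_pG_mul_pow (hσ : 0 < σ) (k : ℕ) : Integrable fun x => pG σ x * x ^ k := by
  have h := integrable_rpow_mul_exp_neg_mul_sq (b := (2 * σ ^ 2)⁻¹) (by positivity)
    (s := k) (by linarith [(Nat.cast_nonneg k : (0 : ℝ) ≤ k)])
  simp only [rpow_natCast] at h
  refine (h.const_mul (√(2 * π) * σ)⁻¹).congr (Eventually.of_forall fun x => ?_)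
  simp only [pG_eq_mul_exp]
  ring

noncomputable def gaussianMoment (σ : ℝ) (k : ℕ) : ℝ :=
  ∫ x, pG σ x * x ^ k

theorem gaussianMoment_zero (hσ : 0 < σ) : gaussianMoment σ 0 = 1 := by
  simp only [gaussianMoment, pow_zero, mul_one, pG_eq_mul_exp, integral_const_mul,
    integral_gaussian]
  rw [show π / (2 * σ ^ 2)⁻¹ = (√(2 * π) * σ) ^ 2 by
    rw [mul_pow, sq_sqrt (by positivity)]; field_simp, sqrt_sq (by positivity),
    inv_mul_cancel₀ (by positivity)]

theorem gaussianMoment_add_two (hσ : 0 < σ) (k : ℕ) :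
    gaussianMoment σ (k + 2) = (k + 1) * σ ^ 2 * gaussianMoment σ k := by
  have hderiv (x : ℝ) : HasDerivAt (fun x => x ^ (k + 1) * pG σ x)
      ((k + 1) * (pG σ x * x ^ k) - (σ ^ 2)⁻¹ * (pG σ x * x ^ (k + 2))) x := by
    refine ((hasDerivAt_pow (k + 1) x).mul (hasDerivAt_pG hσ x)).congr_deriv ?_
    push_cast
    field_simp
    ring
  have h := integral_eq_zero_of_hasDerivAt_of_integrable hderiv
    (((integrable_pG_mul_pow hσ k).const_mul _).sub
      ((integrable_pG_mul_pow hσ (k + 2)).const_mul _))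
    ((integrable_pG_mul_pow hσ (k + 1)).congr (Eventually.of_forall fun x => mul_comm _ _))
  rw [integral_sub ((integrable_pG_mul_pow hσ k).const_mul _)
    ((integrable_pG_mul_pow hσ (k + 2)).const_mul _), integral_const_mul, integral_const_mul] at h
  unfold gaussianMoment
  field_simp at h
  linarith

theorem gaussianMoment_two_mul (hσ : 0 < σ) (n : ℕ) :
    gaussianMoment σ (2 * n) = σ ^ (2 * n) * (2 * n - 1)‼ := by
  induction n with
  | zero => simp [gaussianMoment_zero hσ]
  | succ n ih =>
    rw [Nat.mul_succ, gaussianMoment_add_two hσ, ih, show 2 * n + 2 - 1 = 2 * n + 1 by omega,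
      Nat.doubleFactorial_add_one]
    push_cast
    ring

theorem gaussianMoment_of_even (hσ : 0 < σ) {k : ℕ} (hk : Even k) :
    gaussianMoment σ k = σ ^ k * (k - 1)‼ := by
  obtain ⟨n, rfl⟩ := hk
  rw [← two_mul, gaussianMoment_two_mul hσ]

end Gaussian

section Perturbed

variable {σ : ℝ} {p : ℕ}

noncomputable def perturbedMoment (σ : ℝ) (p k : ℕ) (ε : ℝ) : ℝ :=
  ∫ x, pG σ x * x ^ k * exp (-ε * x ^ p)

theorem Zp_eq_perturbedMoment_zero (ε : ℝ) :
    Zp σ p ε = perturbedMoment σ p 0 ε := by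
  simp [Zp, perturbedMoment]

theorem integrable_pG_mul_pow_mul_exp (hσ : 0 < σ) (hp : Even p) (k : ℕ) {ε : ℝ} (hε : 0 ≤ ε) :
    Integrable fun x => pG σ x * x ^ k * exp (-ε * x ^ p) := by
  refine (integrable_pG_mul_pow hσ k).mul_bdd (c := 1) (by fun_prop)
    (Eventually.of_forall fun x => ?_)
  rw [norm_of_nonneg (exp_pos _).le, exp_le_one_iff, neg_mul, neg_nonpos]
  exact mul_nonneg hε (hp.pow_nonneg x)

theorem abs_perturbedMoment_sub_le (hσ : 0 < σ) (hp : Even p) {k : ℕ} (hk : Even k) {ε : ℝ}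
    (hε : 0 ≤ ε) :
    |perturbedMoment σ p k ε - (gaussianMoment σ k - ε * gaussianMoment σ (k + p))| ≤
      ε ^ 2 / 2 * gaussianMoment σ (k + 2 * p) := by
  have hm := integrable_pG_mul_pow hσ
  have hdiff : perturbedMoment σ p k ε - (gaussianMoment σ k - ε * gaussianMoment σ (k + p)) =
      ∫ x, pG σ x * x ^ k * (exp (-(ε * x ^ p)) - (1 - ε * x ^ p)) := by
    have h (x : ℝ) : pG σ x * x ^ k * (exp (-(ε * x ^ p)) - (1 - ε * x ^ p)) =
        pG σ x * x ^ k * exp (-ε * x ^ p) - (pG σ x * x ^ k - ε * (pG σ x * x ^ (k + p))) := by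
      rw [neg_mul, pow_add]
      ring
    simp_rw [h]
    have hlin : Integrable fun x => pG σ x * x ^ k - ε * (pG σ x * x ^ (k + p)) :=
      (hm k).sub ((hm (k + p)).const_mul ε)
    rw [integral_sub (integrable_pG_mul_pow_mul_exp hσ hp k hε) hlin,
      integral_sub (hm k) ((hm (k + p)).const_mul ε), integral_const_mul]
    rfl
  rw [hdiff, gaussianMoment, ← integral_const_mul, ← norm_eq_abs]
  refine norm_integral_le_of_norm_le ((hm _).const_mul _) (Eventually.of_forall fun x => ?_)
  have hw : 0 ≤ pG σ x * x ^ k := mul_nonneg (pG_pos hσ x).le (hk.pow_nonneg x)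
  rw [norm_mul, norm_of_nonneg hw, norm_eq_abs]
  calc pG σ x * x ^ k * |exp (-(ε * x ^ p)) - (1 - ε * x ^ p)|
      ≤ pG σ x * x ^ k * ((ε * x ^ p) ^ 2 / 2) :=
        mul_le_mul_of_nonneg_left (abs_exp_neg_sub_one_sub_le (mul_nonneg hε (hp.pow_nonneg x))) hw
    _ = ε ^ 2 / 2 * (pG σ x * x ^ (k + 2 * p)) := by ring

theorem perturbedMoment_sub_isBigO (hσ : 0 < σ) (hp : Even p) {k : ℕ} (hk : Even k) :
    (fun ε => perturbedMoment σ p k ε - (gaussianMoment σ k - ε * gaussianMoment σ (k + p)))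
      =O[𝓝[>] 0] (· ^ 2) := by
  refine IsBigO.of_bound (gaussianMoment σ (k + 2 * p) / 2) ?_
  filter_upwards [self_mem_nhdsWithin] with ε (hε : 0 < ε)
  rw [norm_eq_abs, norm_of_nonneg (sq_nonneg ε)]
  linarith [abs_perturbedMoment_sub_le hσ hp hk hε.le]

theorem Hpert_eq (hσ : 0 < σ) (hp : Even p) {ε : ℝ} (hε : 0 ≤ ε) (hZ : 0 < Zp σ p ε) :
    Hpert σ p ε = log (√(2 * π) * σ * Zp σ p ε) +
      (Zp σ p ε)⁻¹ * (perturbedMoment σ p 2 ε / (2 * σ ^ 2) + ε * perturbedMoment σ p p ε) := by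
  set Z := Zp σ p ε
  have hlog (x : ℝ) : log (ppert σ p ε x) =
      -log (√(2 * π) * σ * Z) - x ^ 2 / (2 * σ ^ 2) - ε * x ^ p := by
    rw [ppert, log_mul (by positivity [pG_pos hσ x]) (exp_pos _).ne', log_mul (by positivity)
      (pG_pos hσ x).ne', log_inv, log_exp, log_pG hσ, log_mul (by positivity) hZ.ne']
    ring
  have hI (k : ℕ) := integrable_pG_mul_pow_mul_exp hσ hp k hε
  have hint : (fun x => ppert σ p ε x * log (ppert σ p ε x)) = fun x =>
      -(Z⁻¹ * log (√(2 * π) * σ * Z)) * (pG σ x * x ^ 0 * exp (-ε * x ^ p)) +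
      -(Z⁻¹ / (2 * σ ^ 2)) * (pG σ x * x ^ 2 * exp (-ε * x ^ p)) +
      -(Z⁻¹ * ε) * (pG σ x * x ^ p * exp (-ε * x ^ p)) := by
    ext x
    rw [hlog, ppert]
    ring
  have hI02 : Integrable fun x =>
      -(Z⁻¹ * log (√(2 * π) * σ * Z)) * (pG σ x * x ^ 0 * exp (-ε * x ^ p)) +
      -(Z⁻¹ / (2 * σ ^ 2)) * (pG σ x * x ^ 2 * exp (-ε * x ^ p)) :=
    ((hI 0).const_mul _).add ((hI 2).const_mul _)
  rw [Hpert, hint, integral_add hI02 ((hI p).const_mul _),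
    integral_add ((hI 0).const_mul _) ((hI 2).const_mul _), integral_const_mul, integral_const_mul,
    integral_const_mul, ← perturbedMoment, ← perturbedMoment, ← perturbedMoment,
    ← Zp_eq_perturbedMoment_zero]
  field_simp
  ring

theorem Hpert_sub_isBigO (hσ : 0 < σ) (hp : Even p) :
    (fun ε => Hpert σ p ε -
      (log (√(2 * π) * σ * (1 - ε * gaussianMoment σ p)) + (1 - ε * gaussianMoment σ p)⁻¹ *
        (1 / 2 + ε * (gaussianMoment σ p - gaussianMoment σ (2 + p) / (2 * σ ^ 2)))))
      =O[𝓝[>] 0] (· ^ 2) := by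
  set c := √(2 * π) * σ
  set m := gaussianMoment σ p
  set b : ℝ → ℝ := fun ε => 1 - ε * m
  set G : ℝ → ℝ := fun ε => perturbedMoment σ p 2 ε / (2 * σ ^ 2) + ε * perturbedMoment σ p p ε
  set G₁ : ℝ → ℝ := fun ε => 1 / 2 + ε * (m - gaussianMoment σ (2 + p) / (2 * σ ^ 2))
  have hl : 𝓝[>] (0 : ℝ) ≤ 𝓝 0 := nhdsWithin_le_nhds
  have hZ : (fun ε => Zp σ p ε - b ε) =O[𝓝[>] 0] (· ^ 2) := by
    simpa [b, Zp_eq_perturbedMoment_zero, gaussianMoment_zero hσ] using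
      perturbedMoment_sub_isBigO hσ hp Even.zero
  have hb : Tendsto b (𝓝[>] 0) (𝓝 1) :=
    ((by fun_prop : Continuous b).tendsto' 0 1 (by simp [b])).mono_left hl
  have hZlim : Tendsto (Zp σ p) (𝓝[>] 0) (𝓝 1) := by
    simpa using (hZ.trans_tendsto (((continuous_pow 2).tendsto' 0 0 (by simp)).mono_left hl)).add hb
  have hG : (fun ε => G ε - G₁ ε) =O[𝓝[>] 0] (· ^ 2) := by
    have h₂ := perturbedMoment_sub_isBigO hσ hp even_two
    have hₚ := (perturbedMoment_sub_isBigO hσ hp hp).sub_const_isBigO_id hl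
    have hm₂ : gaussianMoment σ 2 = σ ^ 2 := by simpa using gaussianMoment_of_even hσ even_two
    have hεₚ : (fun ε => ε * (perturbedMoment σ p p ε - m)) =O[𝓝[>] 0] (· ^ 2) :=
      ((isBigO_refl (fun ε : ℝ => ε) _).mul hₚ).congr_right fun ε => (sq ε).symm
    refine ((h₂.const_mul_left (2 * σ ^ 2)⁻¹).add hεₚ).congr_left fun ε => ?_
    simp only [G, G₁, hm₂]
    field_simp
    ring
  have hG₁ : Tendsto G₁ (𝓝[>] 0) (𝓝 (1 / 2)) :=
    ((by fun_prop : Continuous G₁).tendsto' 0 (1 / 2) (by simp [G₁])).mono_left hl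
  have hlog := ((hasStrictDerivAt_log (by positivity : c * 1 ≠ 0)).isBigO_comp_sub_comp
    (hZlim.const_mul c) (hb.const_mul c)).trans ((hZ.const_mul_left c).congr_left fun ε => by ring)
  have hinv := ((hasStrictDerivAt_inv one_ne_zero).isBigO_comp_sub_comp hZlim hb).trans hZ
  have hprod := hinv.mul_sub_mul hG ((hZlim.inv₀ one_ne_zero).isBigO_one ℝ) (hG₁.isBigO_one ℝ)
  refine (hlog.add hprod).congr' ?_ EventuallyEq.rfl
  filter_upwards [self_mem_nhdsWithin, hZlim.eventually (lt_mem_nhds one_pos)] with ε hε hZε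
  rw [Hpert_eq hσ hp (le_of_lt hε) hZε]
  ring

end Perturbed

theorem stmt9_general (σ : ℝ) (hσ : 0 < σ) (p : ℕ) (hpe : Even p)
    (H₁ : ℝ → ℝ) (hH₁ : ∀ ε : ℝ, H₁ ε =
      Real.log (Real.sqrt (2 * Real.pi) * σ *
          (1 - ε * σ ^ p * (Nat.doubleFactorial (p - 1) : ℝ))) +
        (1 - ε * σ ^ p * (Nat.doubleFactorial (p - 1) : ℝ))⁻¹ *
          (1 / 2 + ε * σ ^ p * ((Nat.doubleFactorial (p - 1) : ℝ) -
            (1 / 2) * (Nat.doubleFactorial (p + 1) : ℝ)))) :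
    (fun ε : ℝ => Hpert σ p ε - H₁ ε) =O[𝓝[>] (0 : ℝ)] fun ε => ε ^ 2 := by
  have hmoment : gaussianMoment σ (2 + p) / (2 * σ ^ 2) = σ ^ p * ((1 / 2) * (p + 1)‼) := by
    rw [gaussianMoment_of_even hσ (even_two.add hpe), show 2 + p - 1 = p + 1 by omega, pow_add]
    field_simp
  have hH₁' : H₁ = fun ε => log (√(2 * π) * σ * (1 - ε * gaussianMoment σ p)) +
      (1 - ε * gaussianMoment σ p)⁻¹ *
        (1 / 2 + ε * (gaussianMoment σ p - gaussianMoment σ (2 + p) / (2 * σ ^ 2))) := by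
    ext ε
    rw [hH₁, hmoment, gaussianMoment_of_even hσ hpe]
    ring_nf
  subst hH₁'
  exact Hpert_sub_isBigO hσ hpe

theorem stmt9 (σ : ℝ) (hσ : 0 < σ) (p : ℕ) (hp : 0 < p) (hpe : Even p)
    (H₁ : ℝ → ℝ) (hH₁ : ∀ ε : ℝ, H₁ ε =
      Real.log (Real.sqrt (2 * Real.pi) * σ *
          (1 - ε * σ ^ p * (Nat.doubleFactorial (p - 1) : ℝ))) +
        (1 - ε * σ ^ p * (Nat.doubleFactorial (p - 1) : ℝ))⁻¹ *
          (1 / 2 + ε * σ ^ p * ((Nat.doubleFactorial (p - 1) : ℝ) -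
            (1 / 2) * (Nat.doubleFactorial (p + 1) : ℝ)))) :
    (fun ε : ℝ => Hpert σ p ε - H₁ ε) =O[𝓝[>] (0 : ℝ)] fun ε => ε ^ 2 :=
  stmt9_general σ hσ p hpe H₁ hH₁
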